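/- arXiv:0712.3892 — 2 statements merged into one kernel-verified Lean document; each statement's English description precedes it below -/
import Mathlib

section
/- Multilevel determinantal identity (finite-dimensional version): Let H = H₁ ⊕ ... ⊕ H_m be a direct sum of finite-dimensional inner product spaces, N the block strictly lower triangular 'shift' operator built from injective maps w_{j+1,j}: H_j → H_{j+1}, W := N(I-N)⁻¹, ρ a block-diagonal symmetric operator with blocks ρ_j, and Ψ, Φ: ℂ^N → H linear maps with Ψ_a = (I+W)ι₁ψ_a^{(1)}, Φ_a = (I+W*)ι_m φ_a^{(m)} satisfying the duality ⟨ψ_a^{(1)}, π₁(I-N*)⁻¹ φ_b^{(m)}⟩ = δ_{ab}. Define K := Ψ∘Φᵀ, Ǩ := K - W, and the N×N matrix G_{ab} := ⟨ψ_a^{(1)}, (1-ρ₁)w*_{21}(1-ρ₂)···(1-ρ_{m-1})w*_{m,m-1}(1-ρ_m) φ_b^{(m)}⟩. Then det(G) = det(I - Ǩ∘ρ). -/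
open RealInnerProductSpace


open Polynomial in
lemma matrix_det_one_sub_of_isNilpotent {k : Type*} [Fintype k] [DecidableEq k]
    (M : Matrix k k ℝ) (h : IsNilpotent M) : (1 - M).det = 1 := by
  have hc : M.charpoly = X ^ (Fintype.card k) := by
    rw [← sub_eq_zero]
    exact IsNilpotent.eq_zero (Matrix.isNilpotent_charpoly_sub_pow_of_isNilpotent h)
  have he : (1 - M).det = Polynomial.eval 1 M.charpoly := by
    calc (1 - M).det = ((Polynomial.evalRingHom 1).mapMatrix M.charmatrix).det := by
          congr 1
          ext i j
          by_cases hij : i = j <;>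
            simp [hij, Matrix.charmatrix_apply, Matrix.map_apply, Matrix.one_apply,
              Matrix.diagonal]
      _ = Polynomial.eval 1 M.charpoly := (RingHom.map_det _ _).symm
  rw [he, hc]
  simp

lemma linearMap_det_one_add_of_isNilpotent {V : Type*} [AddCommGroup V] [Module ℝ V]
    [FiniteDimensional ℝ V] (T : V →ₗ[ℝ] V) (h : IsNilpotent T) :
    LinearMap.det (1 + T) = 1 := by
  classical
  let b := Module.finBasis ℝ V
  have hM : IsNilpotent (LinearMap.toMatrixAlgEquiv b T) := h.map _
  have h1 : LinearMap.det (1 + T) = (LinearMap.toMatrix b b (1 + T)).det :=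
    (LinearMap.det_toMatrix b _).symm
  rw [h1]
  have h2 : LinearMap.toMatrix b b (1 + T) = 1 - (-(LinearMap.toMatrixAlgEquiv b T)) := by
    simp [LinearMap.toMatrixAlgEquiv, map_add, sub_neg_eq_add]
  rw [h2]
  exact matrix_det_one_sub_of_isNilpotent _ hM.neg

lemma det_one_sub_sum_rankOne {n : ℕ} {V : Type*} [NormedAddCommGroup V]
    [InnerProductSpace ℝ V] [FiniteDimensional ℝ V] (u v : Fin n → V) :
    LinearMap.det (1 - ∑ a : Fin n, ((innerSL ℝ (v a)).toLinearMap).smulRight (u a))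
      = (1 - Matrix.of (fun a b : Fin n => ⟪v a, u b⟫)).det := by
  classical
  set d := Module.finrank ℝ V
  let b := stdOrthonormalBasis ℝ V
  set T : V →ₗ[ℝ] V := ∑ a : Fin n, ((innerSL ℝ (v a)).toLinearMap).smulRight (u a) with hT
  set P : Matrix (Fin d) (Fin n) ℝ := Matrix.of (fun i a => ⟪b i, u a⟫) with hP
  set Q : Matrix (Fin n) (Fin d) ℝ := Matrix.of (fun a j => ⟪v a, b j⟫) with hQ
  have hTM : LinearMap.toMatrix b.toBasis b.toBasis T = P * Q := by
    ext i j
    rw [LinearMap.toMatrix_apply, OrthonormalBasis.coe_toBasis,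
      OrthonormalBasis.coe_toBasis_repr_apply, OrthonormalBasis.repr_apply_apply]
    have hTb : T (b j) = ∑ a : Fin n, ⟪v a, b j⟫ • u a := by
      simp [hT, LinearMap.sum_apply, LinearMap.smulRight_apply]
    rw [hTb, inner_sum, Matrix.mul_apply]
    simp [hP, hQ, real_inner_smul_right, mul_comm]
  have h1 : LinearMap.det (1 - T) = (1 - P * Q).det := by
    rw [← LinearMap.det_toMatrix b.toBasis, map_sub, hTM, LinearMap.toMatrix_one]
  rw [h1, Matrix.det_one_sub_mul_comm]
  congr 1
  congr 1
  ext a c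
  rw [Matrix.mul_apply]
  simpa [hP, hQ] using b.sum_inner_mul_inner (v a) (u c)

lemma rankOne_comp {V : Type*} [NormedAddCommGroup V] [InnerProductSpace ℝ V]
    [FiniteDimensional ℝ V] (Xl Yr : V →ₗ[ℝ] V) (u v : V) :
    Xl * (((innerSL ℝ v).toLinearMap).smulRight u) * Yr
      = ((innerSL ℝ (LinearMap.adjoint Yr v)).toLinearMap).smulRight (Xl u) := by
  refine LinearMap.ext fun z => ?_
  simp [Module.End.mul_apply, LinearMap.smulRight_apply, LinearMap.adjoint_inner_left]

lemma shift_nilpotent_aux {m' : ℕ} {H : Fin (m' + 1) → Type*}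
    [∀ j, AddCommGroup (H j)] [∀ j, Module ℝ (H j)]
    {V : Type*} [AddCommGroup V] [Module ℝ V]
    (ι : ∀ j, H j →ₗ[ℝ] V) (π : ∀ j, V →ₗ[ℝ] H j)
    (hπι0 : ∀ i j (x : H j), i ≠ j → π i (ι j x) = 0)
    (hdecv : ∀ v : V, ∑ j, ι j (π j v) = v)
    (X : V →ₗ[ℝ] V) (f : Fin (m' + 1) → Fin (m' + 1))
    (hX : ∀ i j, (f i : ℕ) ≤ (f j : ℕ) → ∀ x : H j, π i (X (ι j x)) = 0) :
    X ^ (m' + 1) = 0 := by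
  have key : ∀ (t : ℕ) (j i : Fin (m' + 1)) (x : H j), (f i : ℕ) < (f j : ℕ) + t →
      π i ((X ^ t) (ι j x)) = 0 := by
    intro t
    induction t with
    | zero =>
      intro j i x h
      exact hπι0 i j x (by intro hij; subst hij; omega)
    | succ t ih =>
      intro j i x h
      rw [pow_succ', Module.End.mul_apply]
      set y := (X ^ t) (ι j x) with hy
      rw [← hdecv y, map_sum, map_sum]
      refine Finset.sum_eq_zero fun k _ => ?_
      by_cases hk : (f i : ℕ) ≤ (f k : ℕ)
      · exact hX i k hk _
      · have hzero : π k y = 0 := ih j k x (by omega)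
        rw [hzero]
        simp
  have hz : ∀ (j : Fin (m' + 1)) (x : H j), (X ^ (m' + 1)) (ι j x) = 0 := by
    intro j x
    rw [← hdecv ((X ^ (m' + 1)) (ι j x))]
    refine Finset.sum_eq_zero fun i _ => ?_
    rw [key (m' + 1) j i x (by have := (f i).is_lt; omega)]
    simp
  ext v
  rw [← hdecv v, map_sum]
  simp only [LinearMap.zero_apply]
  exact Finset.sum_eq_zero fun j _ => hz j _

set_option maxHeartbeats 1000000 in
/-- Multilevel determinantal identity (finite-dimensional version).
`V` plays the role of the orthogonal direct sum `H = H₁ ⊕ ⋯ ⊕ H_m`, with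
canonical injections `ι j` and projections `π j`; `N` is the block strictly
lower triangular shift operator built from the injective maps
`w j : H j → H (j+1)`; `W := N(I-N)⁻¹`; `ρ` is block diagonal with symmetric
blocks `ρH j`; `Ψ a = (I+W)ι₀ψ_a`, `Φ a = (I+W*)ι_m φ_a` satisfy the duality
`⟨ι₀ψ_a, (I-N*)⁻¹ ι_m φ_b⟩ = δ_{ab}`; `K := Ψ∘Φᵀ`, `Ǩ := K - W`, and
`G_{ab} = ⟨ψ_a, (1-ρ₁)w*₂₁(1-ρ₂)⋯w*_{m,m-1}(1-ρ_m) φ_b⟩`.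
Then `det G = det(I - Ǩ∘ρ)`. -/
theorem multilevel_determinantal_identity
    {m' n : ℕ} {H : Fin (m' + 1) → Type*}
    [∀ j, NormedAddCommGroup (H j)] [∀ j, InnerProductSpace ℝ (H j)]
    [∀ j, FiniteDimensional ℝ (H j)]
    {V : Type*} [NormedAddCommGroup V] [InnerProductSpace ℝ V]
    [FiniteDimensional ℝ V]
    (ι : ∀ j, H j →ₗ[ℝ] V) (π : ∀ j, V →ₗ[ℝ] H j)
    (hπι : ∀ j, (π j) ∘ₗ (ι j) = LinearMap.id)
    (hπι0 : ∀ i j, i ≠ j → (π i) ∘ₗ (ι j) = 0)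
    (hsum : ∑ j, (ι j) ∘ₗ (π j) = LinearMap.id)
    (hadj : ∀ j, LinearMap.adjoint (ι j) = π j)
    (w : ∀ j : Fin m', H j.castSucc →ₗ[ℝ] H j.succ)
    (hw : ∀ j, Function.Injective (w j))
    (N : V →ₗ[ℝ] V)
    (hN : ∀ (j : Fin m') (v : H j.castSucc), N (ι j.castSucc v) = ι j.succ (w j v))
    (hNtop : ∀ v : H (Fin.last m'), N (ι (Fin.last m') v) = 0)
    (ρH : ∀ j, H j →ₗ[ℝ] H j) (hρsym : ∀ j, IsSelfAdjoint (ρH j))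
    (ρ : V →ₗ[ℝ] V) (hρ : ∀ j v, ρ (ι j v) = ι j (ρH j v))
    (ψ : Fin n → H 0) (φ : Fin n → H (Fin.last m'))
    (hdual : ∀ a b : Fin n,
      ⟪ι 0 (ψ a),
        Ring.inverse (1 - LinearMap.adjoint N) (ι (Fin.last m') (φ b))⟫
        = if a = b then 1 else 0) :
    (Matrix.of fun a b : Fin n =>
        ⟪ι 0 (ψ a),
          (((1 - ρ) * LinearMap.adjoint N) ^ m' * (1 - ρ))
            (ι (Fin.last m') (φ b))⟫).det
      = LinearMap.det
          (1 -
            ((∑ a : Fin n,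
                ((innerSL ℝ
                    ((1 + LinearMap.adjoint (N * Ring.inverse (1 - N)))
                      (ι (Fin.last m') (φ a)))).toLinearMap).smulRight
                  ((1 + N * Ring.inverse (1 - N)) (ι 0 (ψ a))))
              - N * Ring.inverse (1 - N)) * ρ) := by
  classical
  -- pointwise basics
  have hdecv : ∀ v : V, ∑ j, ι j (π j v) = v := by
    intro v
    simpa [LinearMap.sum_apply] using LinearMap.congr_fun hsum v
  have hπιa : ∀ j (x : H j), π j (ι j x) = x := fun j x => by
    simpa using LinearMap.congr_fun (hπι j) x
  have hπι0a : ∀ i j (x : H j), i ≠ j → π i (ι j x) = 0 := fun i j x hij => by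
    simpa using LinearMap.congr_fun (hπι0 i j hij) x
  have hinnerι : ∀ (j) (x : H j) (z : V), ⟪ι j x, z⟫ = ⟪x, π j z⟫ := by
    intro j x z
    rw [← hadj j]
    exact (LinearMap.adjoint_inner_right (ι j) x z).symm
  have hinnerπ : ∀ (j) (x : H j) (z : V), ⟪z, ι j x⟫ = ⟪π j z, x⟫ := by
    intro j x z
    rw [← hadj j]
    exact (LinearMap.adjoint_inner_left (ι j) x z).symm
  have hρπ : ∀ (i : Fin (m' + 1)) (v : V), π i (ρ v) = ρH i (π i v) := by
    intro i v
    conv_lhs => rw [← hdecv v]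
    rw [map_sum, map_sum, Finset.sum_eq_single i]
    · rw [hρ, hπιa]
    · intro j _ hji
      rw [hρ, hπι0a i j _ (Ne.symm hji)]
    · intro h
      exact absurd (Finset.mem_univ i) h
  have hNv : ∀ v : V, N v = ∑ j : Fin m', ι j.succ (w j (π j.castSucc v)) := by
    intro v
    conv_lhs => rw [← hdecv v]
    rw [map_sum, Fin.sum_univ_castSucc]
    simp only [hN, hNtop, add_zero]
  have hπN0 : ∀ v, π 0 (N v) = 0 := by
    intro v
    rw [hNv, map_sum]
    exact Finset.sum_eq_zero fun j _ => hπι0a _ _ _ (Ne.symm (Fin.succ_ne_zero j))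
  have hπNsucc : ∀ (k : Fin m') (v : V), π k.succ (N v) = w k (π k.castSucc v) := by
    intro k v
    rw [hNv, map_sum, Finset.sum_eq_single k]
    · rw [hπιa]
    · intro j _ hjk
      exact hπι0a _ _ _ fun h => hjk (Fin.succ_injective _ h).symm
    · intro h
      exact absurd (Finset.mem_univ k) h
  have hπNι : ∀ (i j : Fin (m' + 1)), (i : ℕ) ≤ (j : ℕ) → ∀ x : H j,
      π i (N (ι j x)) = 0 := by
    intro i j hij x
    rcases Fin.eq_zero_or_eq_succ i with rfl | ⟨k, rfl⟩
    · exact hπN0 _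
    · rw [hπNsucc, hπι0a _ _ _ (by
        refine Fin.ne_of_val_ne ?_
        rw [Fin.val_succ] at hij
        rw [Fin.coe_castSucc]
        omega), map_zero]
  set Nd := LinearMap.adjoint N with hNdd
  have hπN'last : ∀ v, π (Fin.last m') (Nd v) = 0 := by
    intro v
    refine ext_inner_left ℝ fun y => ?_
    rw [inner_zero_right]
    calc ⟪y, π (Fin.last m') (Nd v)⟫ = ⟪ι (Fin.last m') y, Nd v⟫ := (hinnerι _ _ _).symm
      _ = ⟪N (ι (Fin.last m') y), v⟫ := LinearMap.adjoint_inner_right N _ _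
      _ = 0 := by rw [hNtop, inner_zero_left]
  have hπN'c : ∀ (k : Fin m') (v : V),
      π k.castSucc (Nd v) = LinearMap.adjoint (w k) (π k.succ v) := by
    intro k v
    refine ext_inner_left ℝ fun y => ?_
    calc ⟪y, π k.castSucc (Nd v)⟫ = ⟪ι k.castSucc y, Nd v⟫ := (hinnerι _ _ _).symm
      _ = ⟪N (ι k.castSucc y), v⟫ := LinearMap.adjoint_inner_right N _ _
      _ = ⟪ι k.succ (w k y), v⟫ := by rw [hN]
      _ = ⟪w k y, π k.succ v⟫ := hinnerι _ _ _
      _ = ⟪y, LinearMap.adjoint (w k) (π k.succ v)⟫ :=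
        (LinearMap.adjoint_inner_right (w k) _ _).symm
  have hπN'ι : ∀ (i j : Fin (m' + 1)), (j : ℕ) ≤ (i : ℕ) → ∀ x : H j,
      π i (Nd (ι j x)) = 0 := by
    intro i j hij x
    rcases Fin.eq_castSucc_or_eq_last i with ⟨k, rfl⟩ | rfl
    · rw [hπN'c, hπι0a _ _ _ (by
        refine Fin.ne_of_val_ne ?_
        rw [Fin.coe_castSucc] at hij
        rw [Fin.val_succ]
        omega), map_zero]
    · exact hπN'last _
  -- self-adjointness of ρ
  have hρv : ∀ v, ρ v = ∑ j, ι j (ρH j (π j v)) := by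
    intro v
    conv_lhs => rw [← hdecv v]
    rw [map_sum]
    exact Finset.sum_congr rfl fun j _ => hρ j _
  have hρadj : LinearMap.adjoint ρ = ρ := by
    refine LinearMap.ext fun v => ext_inner_left ℝ fun y => ?_
    rw [LinearMap.adjoint_inner_right]
    rw [hρv y, hρv v, sum_inner, inner_sum]
    refine Finset.sum_congr rfl fun j _ => ?_
    rw [hinnerι, hinnerπ]
    exact ((LinearMap.isSymmetric_iff_isSelfAdjoint (ρH j)).mpr (hρsym j)) _ _
  -- algebra setup
  set Q := Ring.inverse (1 - N) with hQdef
  set Rr := Ring.inverse (1 - Nd) with hRdef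
  set W := N * Q with hWdef
  set Wd := LinearMap.adjoint W with hWddef
  have hNnil : N ^ (m' + 1) = 0 :=
    shift_nilpotent_aux ι π hπι0a hdecv N id (fun i j h x => hπNι i j h x)
  have hNdnil : Nd ^ (m' + 1) = 0 := by
    rw [hNdd, ← LinearMap.star_eq_adjoint, ← star_pow, hNnil, star_zero]
  have huN : IsUnit ((1 : V →ₗ[ℝ] V) - N) := IsNilpotent.isUnit_one_sub ⟨_, hNnil⟩
  have huNd : IsUnit ((1 : V →ₗ[ℝ] V) - Nd) := IsNilpotent.isUnit_one_sub ⟨_, hNdnil⟩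
  have hQ1 : (1 - N) * Q = 1 := Ring.mul_inverse_cancel _ huN
  have hQ2 : Q * (1 - N) = 1 := Ring.inverse_mul_cancel _ huN
  have hR1 : (1 - Nd) * Rr = 1 := Ring.mul_inverse_cancel _ huNd
  have hR2 : Rr * (1 - Nd) = 1 := Ring.inverse_mul_cancel _ huNd
  have hcomm : N * Q = Q * N := by
    calc N * Q = Q * ((1 - N) * (N * Q)) := by rw [← mul_assoc, hQ2, one_mul]
      _ = Q * (N * ((1 - N) * Q)) := by rw [show (1 - N) * (N * Q) = N * ((1 - N) * Q) by
            noncomm_ring]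
      _ = Q * N := by rw [hQ1, mul_one]
  have hQW : Q = 1 + W := by
    have h4 : Q - Q * N = 1 := by rw [← hQ2]; noncomm_ring
    rw [hWdef, hcomm, ← h4]
    noncomm_ring
  have hρstar : star ρ = ρ := by rw [LinearMap.star_eq_adjoint, hρadj]
  have hQstar : star Q = Rr := by
    rw [hQdef, hRdef, ← Ring.inverse_star, star_sub, star_one, LinearMap.star_eq_adjoint, hNdd]
  have hWstar : star W = Rr * Nd := by
    rw [hWdef, star_mul, hQstar, LinearMap.star_eq_adjoint, ← hNdd]
  have hWdRN : Wd = Rr * Nd := by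
    rw [hWddef, ← LinearMap.star_eq_adjoint, hWstar]
  have hRW : Rr = 1 + Wd := by
    have := congrArg star hQW
    rw [hQstar, star_add, star_one] at this
    rw [this, hWddef, LinearMap.star_eq_adjoint]
  -- W is strictly raising
  have hπWι : ∀ i : Fin (m' + 1), ∀ j : Fin (m' + 1), (i : ℕ) ≤ (j : ℕ) → ∀ x : H j,
      π i (W (ι j x)) = 0 := by
    intro i
    induction i using Fin.induction with
    | zero =>
      intro j hij x
      rw [hWdef, Module.End.mul_apply]
      exact hπN0 _
    | succ k ih =>
      intro j hij x
      rw [hWdef, Module.End.mul_apply, hπNsucc]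
      have hQapp : Q (ι j x) = ι j x + W (ι j x) := by
        rw [hQW, LinearMap.add_apply, Module.End.one_apply]
      rw [Fin.val_succ] at hij
      rw [hQapp, map_add, hπι0a _ _ _ (Fin.ne_of_val_ne (by rw [Fin.coe_castSucc]; omega)),
        ih j (by rw [Fin.coe_castSucc]; omega) x, add_zero, map_zero]
  have hπWdι : ∀ (i j : Fin (m' + 1)), (j : ℕ) ≤ (i : ℕ) → ∀ x : H j,
      π i (Wd (ι j x)) = 0 := by
    intro i j hij x
    refine ext_inner_left ℝ fun y => ?_
    rw [inner_zero_right]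
    calc ⟪y, π i (Wd (ι j x))⟫ = ⟪ι i y, Wd (ι j x)⟫ := (hinnerι _ _ _).symm
      _ = ⟪W (ι i y), ι j x⟫ := by rw [hWddef]; exact LinearMap.adjoint_inner_right W _ _
      _ = ⟪π j (W (ι i y)), x⟫ := hinnerπ _ _ _
      _ = 0 := by rw [hπWι j i hij y, inner_zero_left]
  -- nilpotency of the combinations
  have hWρnil : IsNilpotent (W * ρ) :=
    ⟨m' + 1, shift_nilpotent_aux ι π hπι0a hdecv (W * ρ) id (fun i j h x => by
      rw [Module.End.mul_apply, hρ]
      exact hπWι i j h _)⟩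
  have hρWdnil : IsNilpotent (ρ * Wd) :=
    ⟨m' + 1, shift_nilpotent_aux ι π hπι0a hdecv (ρ * Wd) Fin.rev (fun i j h x => by
      have h' : (j : ℕ) ≤ (i : ℕ) := by
        have hi := i.is_lt; have hj := j.is_lt
        simp only [Fin.val_rev] at h
        omega
      rw [Module.End.mul_apply, hρπ, hπWdι i j h' x, map_zero])⟩
  set A := (1 - ρ) * Nd with hAdef
  have hAnil : A ^ (m' + 1) = 0 :=
    shift_nilpotent_aux ι π hπι0a hdecv A Fin.rev (fun i j h x => by
      have h' : (j : ℕ) ≤ (i : ℕ) := by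
        have hi := i.is_lt; have hj := j.is_lt
        simp only [Fin.val_rev] at h
        omega
      rw [hAdef, Module.End.mul_apply, LinearMap.sub_apply, Module.End.one_apply, map_sub,
        hρπ, hπN'ι i j h' x, map_zero, sub_zero])
  have huWρ : IsUnit ((1 : V →ₗ[ℝ] V) + W * ρ) := IsNilpotent.isUnit_one_add hWρnil
  have huρWd : IsUnit ((1 : V →ₗ[ℝ] V) + ρ * Wd) := IsNilpotent.isUnit_one_add hρWdnil
  set F' := Ring.inverse (1 + W * ρ) with hF'def
  set F := Ring.inverse (1 + ρ * Wd) with hFdef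
  have hF'1 : (1 + W * ρ) * F' = 1 := Ring.mul_inverse_cancel _ huWρ
  have hF1 : F * (1 + ρ * Wd) = 1 := Ring.inverse_mul_cancel _ huρWd
  have hFstar : star F' = F := by
    rw [hF'def, hFdef, ← Ring.inverse_star, star_add, star_one, star_mul, hρstar,
      LinearMap.star_eq_adjoint, ← hWddef]
  -- support of the G-vectors
  have hGsupp : ∀ (t : ℕ) (x : H (Fin.last m')) (i : Fin (m' + 1)), (i : ℕ) + t ≠ m' →
      π i ((A ^ t) ((1 - ρ) (ι (Fin.last m') x))) = 0 := by
    intro t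
    induction t with
    | zero =>
      intro x i hi
      rw [pow_zero, Module.End.one_apply, LinearMap.sub_apply, Module.End.one_apply, map_sub,
        hρπ, hπι0a _ _ _ (Fin.ne_of_val_ne (by rw [Fin.val_last]; omega)), map_zero, sub_zero]
    | succ t ih =>
      intro x i hi
      rw [pow_succ', Module.End.mul_apply, hAdef, Module.End.mul_apply, LinearMap.sub_apply,
        Module.End.one_apply, map_sub, hρπ]
      have hz : π i (Nd ((A ^ t) ((1 - ρ) (ι (Fin.last m') x)))) = 0 := by
        rcases Fin.eq_castSucc_or_eq_last i with ⟨k, rfl⟩ | rfl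
        · rw [hπN'c, ih x k.succ (by
            rw [Fin.coe_castSucc] at hi
            rw [Fin.val_succ]
            omega), map_zero]
        · exact hπN'last _
      rw [hz, map_zero, sub_zero]
  -- geometric series
  set S := ∑ t ∈ Finset.range (m' + 1), A ^ t with hSdef
  have hS1 : S * (1 - A) = 1 := by
    have h := geom_sum_mul A (m' + 1)
    rw [hAnil] at h
    calc S * (1 - A) = -(S * (A - 1)) := by noncomm_ring
      _ = 1 := by rw [h]; simp
  have hfact : (1 : V →ₗ[ℝ] V) - A = (1 + ρ * Wd) * (1 - Nd) := by
    have h1 : Wd * (1 - Nd) = Nd := by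
      rw [hWdRN]
      calc Rr * Nd * (1 - Nd) = Rr * ((1 - Nd) * Nd) := by
            rw [mul_assoc, show Nd * (1 - Nd) = (1 - Nd) * Nd by noncomm_ring]
        _ = Rr * (1 - Nd) * Nd := by rw [mul_assoc]
        _ = Nd := by rw [hR2, one_mul]
    calc (1 : V →ₗ[ℝ] V) - A = 1 - Nd + ρ * Nd := by rw [hAdef]; noncomm_ring
      _ = 1 - Nd + ρ * (Wd * (1 - Nd)) := by rw [h1]
      _ = (1 + ρ * Wd) * (1 - Nd) := by noncomm_ring
  have hSRF : S = Rr * F := by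
    have hright : ((1 : V →ₗ[ℝ] V) - A) * (Rr * F) = 1 := by
      rw [hfact]
      calc (1 + ρ * Wd) * (1 - Nd) * (Rr * F) = (1 + ρ * Wd) * ((1 - Nd) * Rr) * F := by
            rw [mul_assoc, mul_assoc, mul_assoc]
        _ = (1 + ρ * Wd) * F := by rw [hR1, mul_one]
        _ = 1 := Ring.mul_inverse_cancel _ huρWd
    calc S = S * (((1 : V →ₗ[ℝ] V) - A) * (Rr * F)) := by rw [hright, mul_one]
      _ = (S * (1 - A)) * (Rr * F) := by rw [mul_assoc]
      _ = Rr * F := by rw [hS1, one_mul]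
  have hL3 : S * (1 - ρ) = Rr - Rr * F * (ρ * (1 + Wd)) := by
    have h6 : (1 : V →ₗ[ℝ] V) - ρ = (1 + ρ * Wd) - ρ * (1 + Wd) := by noncomm_ring
    calc S * (1 - ρ) = Rr * F * ((1 + ρ * Wd) - ρ * (1 + Wd)) := by rw [hSRF, ← h6]
      _ = Rr * (F * (1 + ρ * Wd)) - Rr * F * (ρ * (1 + Wd)) := by noncomm_ring
      _ = Rr - Rr * F * (ρ * (1 + Wd)) := by rw [hF1, mul_one]
  -- the G matrix entries
  have hG : ∀ a b : Fin n,
      ⟪ι 0 (ψ a), ((A ^ m' * (1 - ρ)) (ι (Fin.last m') (φ b)))⟫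
        = (if a = b then (1 : ℝ) else 0)
          - ⟪ι 0 (ψ a), ((Rr * F * ρ) ((1 + Wd) (ι (Fin.last m') (φ b))))⟫ := by
    intro a b
    have hterm : ⟪ι 0 (ψ a), ((S * (1 - ρ)) (ι (Fin.last m') (φ b)))⟫
        = ⟪ι 0 (ψ a), ((A ^ m' * (1 - ρ)) (ι (Fin.last m') (φ b)))⟫ := by
      rw [hSdef, Finset.sum_mul, LinearMap.sum_apply, inner_sum, Finset.sum_eq_single m']
      · intro t _ htne
        rw [Module.End.mul_apply, hinnerι, hGsupp t _ 0 (by simp [htne]), inner_zero_right]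
      · intro hm
        exact absurd (Finset.self_mem_range_succ m') hm
    rw [← hterm, hL3]
    rw [LinearMap.sub_apply, inner_sub_right]
    rw [hdual a b]
    rw [show Rr * F * (ρ * (1 + Wd)) = (Rr * F * ρ) * (1 + Wd) by noncomm_ring, Module.End.mul_apply]
  -- the right-hand side
  set K := ∑ a : Fin n,
      ((innerSL ℝ ((1 + Wd) (ι (Fin.last m') (φ a)))).toLinearMap).smulRight
        ((1 + W) (ι 0 (ψ a))) with hKdef
  have hfact2 : (1 : V →ₗ[ℝ] V) - (K - W) * ρ = (1 + W * ρ) * (1 - F' * (K * ρ)) := by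
    calc (1 : V →ₗ[ℝ] V) - (K - W) * ρ = (1 + W * ρ) - K * ρ := by noncomm_ring
      _ = (1 + W * ρ) - ((1 + W * ρ) * F') * (K * ρ) := by rw [hF'1, one_mul]
      _ = (1 + W * ρ) * (1 - F' * (K * ρ)) := by noncomm_ring
  have hFK : F' * (K * ρ) = ∑ a : Fin n,
      ((innerSL ℝ (ρ ((1 + Wd) (ι (Fin.last m') (φ a))))).toLinearMap).smulRight
        (F' ((1 + W) (ι 0 (ψ a)))) := by
    rw [hKdef, Finset.sum_mul, Finset.mul_sum]
    refine Finset.sum_congr rfl fun a _ => ?_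
    rw [← mul_assoc, rankOne_comp, hρadj]
  have hsymm : ∀ a b : Fin n,
      ⟪ρ ((1 + Wd) (ι (Fin.last m') (φ a))), F' ((1 + W) (ι 0 (ψ b)))⟫
        = ⟪ι 0 (ψ b), ((Rr * F * ρ) ((1 + Wd) (ι (Fin.last m') (φ a))))⟫ := by
    intro a b
    have hadjFQ : LinearMap.adjoint (F' * (1 + W)) = Rr * F := by
      rw [← LinearMap.star_eq_adjoint, star_mul, star_add, star_one, hFstar,
        LinearMap.star_eq_adjoint, ← hWddef, ← hRW]
    calc ⟪ρ ((1 + Wd) (ι (Fin.last m') (φ a))), F' ((1 + W) (ι 0 (ψ b)))⟫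
        = ⟪ρ ((1 + Wd) (ι (Fin.last m') (φ a))), (F' * (1 + W)) (ι 0 (ψ b))⟫ := by
          rw [Module.End.mul_apply]
      _ = ⟪(LinearMap.adjoint (F' * (1 + W))) (ρ ((1 + Wd) (ι (Fin.last m') (φ a)))),
            ι 0 (ψ b)⟫ := (LinearMap.adjoint_inner_left _ _ _).symm
      _ = ⟪ι 0 (ψ b),
            (LinearMap.adjoint (F' * (1 + W))) (ρ ((1 + Wd) (ι (Fin.last m') (φ a))))⟫ :=
          real_inner_comm _ _
      _ = ⟪ι 0 (ψ b), ((Rr * F * ρ) ((1 + Wd) (ι (Fin.last m') (φ a))))⟫ := by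
          rw [hadjFQ]; rfl
  have hMat : (Matrix.of fun a b : Fin n =>
        ⟪ι 0 (ψ a), ((A ^ m' * (1 - ρ)) (ι (Fin.last m') (φ b)))⟫)
      = (1 - Matrix.of fun a b : Fin n =>
          ⟪ρ ((1 + Wd) (ι (Fin.last m') (φ a))), F' ((1 + W) (ι 0 (ψ b)))⟫).transpose := by
    ext a b
    rw [Matrix.transpose_apply, Matrix.of_apply, Matrix.sub_apply, Matrix.one_apply,
      Matrix.of_apply, hG a b, hsymm b a]
    by_cases h : a = b
    · simp [h]
    · simp [h, Ne.symm h]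

  rw [hMat, Matrix.det_transpose, hfact2, Module.End.mul_eq_comp, LinearMap.det_comp,
    linearMap_det_one_add_of_isNilpotent _ hWρnil, one_mul, hFK,
    det_one_sub_sum_rankOne]
end

section
/- Multilevel Andreief identity for m = 2: ∫∫ det(ψ_a(x_b)) det(w(y_a, x_b)) det(φ_a(y_b)) dμ^N(x) dν^N(y) = (N!)² det(∫∫ ψ_a(x) w(y,x) φ_b(y) dμ(x) dν(y)), where all determinants are of N×N matrices. -/
/-!
Expanding the three determinants over permutations `σ, π, τ` writes the integrand as a signed
sum of products `∏ b, ψ (σ b) (x b) * w (y (π b)) (x b) * φ (τ (π b)) (y (π b))`. Pairing `x b`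
with `y (π b)` is a measure-preserving change of variables `(Γ₁ᴺ) × (Γ₂ᴺ) → (Γ₁ × Γ₂)ᴺ`, so by
Fubini each term integrates to `∏ b, K (σ b) (τ (π b))`, where `K` is the matrix on the right.
Substituting `ρ = τ * π`, the sum over `τ` is `sign σ` times the determinant of `K` with rows
permuted by `σ`, that is `det K` whatever `σ` and `π` are, and there are `(N!)²` such pairs.
-/

open MeasureTheory Equiv

namespace Matrix

variable {n R : Type*} [Fintype n] [DecidableEq n] [CommRing R]

theorem det_mul_det_mul_det_eq_sum (A B C : Matrix n n R) :
    A.det * B.det * C.det = ∑ σ : Perm n, ∑ π : Perm n, ∑ τ : Perm n,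
      ((Perm.sign σ * Perm.sign π * Perm.sign τ : ℤˣ) : R)
        * ∏ b, A (σ b) b * B (π b) b * C (τ (π b)) (π b) := by
  rw [det_apply', det_apply', det_apply', Finset.sum_mul_sum, Finset.sum_mul]
  refine Fintype.sum_congr _ _ fun σ => ?_
  rw [Finset.sum_mul_sum]
  refine Fintype.sum_congr _ _ fun π => Fintype.sum_congr _ _ fun τ => ?_
  rw [← Equiv.prod_comp π fun c => C (τ c) c, Finset.prod_mul_distrib, Finset.prod_mul_distrib]
  push_cast
  ring

theorem sum_sign_mul_prod_perm_eq_sign_mul_det (K : Matrix n n R) (σ : Perm n) :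
    ∑ ρ : Perm n, ((Perm.sign ρ : ℤ) : R) * ∏ b, K (σ b) (ρ b) = Perm.sign σ * K.det := by
  rw [← det_permute, ← det_transpose, det_apply']
  rfl

theorem sum_sign_mul_prod_eq_factorial_sq_mul_det (K : Matrix n n R) :
    ∑ σ : Perm n, ∑ π : Perm n, ∑ τ : Perm n,
      ((Perm.sign σ * Perm.sign π * Perm.sign τ : ℤˣ) : R) * ∏ b, K (σ b) (τ (π b))
      = (Fintype.card n).factorial ^ 2 * K.det := by
  have sum_over_τ (σ π : Perm n) : ∑ τ : Perm n,
      ((Perm.sign σ * Perm.sign π * Perm.sign τ : ℤˣ) : R) * ∏ b, K (σ b) (τ (π b)) = K.det := by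
    calc _ = ∑ τ : Perm n, ((Perm.sign σ : ℤ) : R)
              * (((Perm.sign (τ * π) : ℤ) : R) * ∏ b, K (σ b) ((τ * π) b)) := by
          refine Fintype.sum_congr _ _ fun τ => ?_
          simp only [map_mul, Perm.mul_apply]
          push_cast
          ring
      _ = ((Perm.sign σ : ℤ) : R) * ∑ ρ : Perm n, ((Perm.sign ρ : ℤ) : R) * ∏ b, K (σ b) (ρ b) := by
          rw [← Finset.mul_sum]
          exact congrArg _ (Fintype.sum_equiv (Equiv.mulRight π) _ _ fun τ => rfl)
      _ = K.det := by
          rw [sum_sign_mul_prod_perm_eq_sign_mul_det, ← mul_assoc, ← Int.cast_mul,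
            ← Units.val_mul, Int.units_mul_self, Units.val_one, Int.cast_one, one_mul]
  simp only [sum_over_τ, Finset.sum_const, Finset.card_univ, Fintype.card_perm, nsmul_eq_mul]
  ring

end Matrix

section PermutedPairing

variable {ι α β 𝕜 : Type*} [Fintype ι] [MeasurableSpace α] [MeasurableSpace β]
  {μ : Measure α} {ν : Measure β} [SigmaFinite μ] [SigmaFinite ν] [RCLike 𝕜]

theorem measurePreserving_pairing_perm (π : Perm ι) :
    MeasurePreserving (fun p : (ι → α) × (ι → β) => fun i => (p.1 i, p.2 (π i)))
      ((Measure.pi fun _ => μ).prod (Measure.pi fun _ => ν)) (Measure.pi fun _ => μ.prod ν) := by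
  have hπ : MeasurePreserving (fun y : ι → β => fun i => y (π i))
      (Measure.pi fun _ => ν) (Measure.pi fun _ => ν) := by
    convert measurePreserving_piCongrLeft (fun _ => ν) π.symm using 1
    ext y i
    simpa using (MeasurableEquiv.piCongrLeft_apply_apply (β := fun _ => β) π.symm y (π i)).symm
  exact (measurePreserving_arrowProdEquivProdArrow α β ι _ _).symm.comp
    ((MeasurePreserving.id _).prod hπ)

variable {f : ι → α × β → 𝕜}

theorem integrable_prod_pairing_perm (hf : ∀ i, Integrable (f i) (μ.prod ν)) (π : Perm ι) :
    Integrable (fun p : (ι → α) × (ι → β) => ∏ i, f i (p.1 i, p.2 (π i)))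
      ((Measure.pi fun _ => μ).prod (Measure.pi fun _ => ν)) :=
  ((measurePreserving_pairing_perm π).integrable_comp
    (Integrable.fintype_prod hf).aestronglyMeasurable).2 (Integrable.fintype_prod hf)

theorem integral_prod_pairing_perm (hf : ∀ i, Integrable (f i) (μ.prod ν)) (π : Perm ι) :
    ∫ p : (ι → α) × (ι → β), ∏ i, f i (p.1 i, p.2 (π i))
        ∂(Measure.pi fun _ => μ).prod (Measure.pi fun _ => ν)
      = ∏ i, ∫ q, f i q ∂μ.prod ν := by
  have h := measurePreserving_pairing_perm (μ := μ) (ν := ν) π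
  rw [← integral_fintype_prod_eq_prod, ← h.map_eq, integral_map h.measurable.aemeasurable]
  exact h.map_eq ▸ (Integrable.fintype_prod hf).aestronglyMeasurable

end PermutedPairing

theorem andreief_two_level_general {Γ₁ Γ₂ : Type*} [MeasurableSpace Γ₁] [MeasurableSpace Γ₂]
    (μ : Measure Γ₁) (ν : Measure Γ₂) [SigmaFinite μ] [SigmaFinite ν] {N : ℕ}
    (ψ : Fin N → Γ₁ → ℂ) (φ : Fin N → Γ₂ → ℂ) (w : Γ₂ → Γ₁ → ℂ)
    (hInt : ∀ a b, Integrable (fun p : Γ₁ × Γ₂ => ψ a p.1 * w p.2 p.1 * φ b p.2)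
      (μ.prod ν))
    (hIntN : Integrable
      (fun p : (Fin N → Γ₁) × (Fin N → Γ₂) =>
        (Matrix.of fun a b => ψ a (p.1 b)).det
          * (Matrix.of fun a b => w (p.2 a) (p.1 b)).det
          * (Matrix.of fun a b => φ a (p.2 b)).det)
      ((Measure.pi fun _ => μ).prod (Measure.pi fun _ => ν))) :
    (∫ x : Fin N → Γ₁, ∫ y : Fin N → Γ₂,
        (Matrix.of fun a b => ψ a (x b)).det
          * (Matrix.of fun a b => w (y a) (x b)).det
          * (Matrix.of fun a b => φ a (y b)).det
        ∂(Measure.pi fun _ => ν) ∂(Measure.pi fun _ => μ))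
      = ((N.factorial : ℂ))^2
          * (Matrix.of fun a b =>
              ∫ x, ∫ y, ψ a x * w y x * φ b y ∂ν ∂μ).det := by
  set F : Fin N → Fin N → Γ₁ × Γ₂ → ℂ := fun a c q => ψ a q.1 * w q.2 q.1 * φ c q.2
  have hK : (Matrix.of fun a c => ∫ x, ∫ y, ψ a x * w y x * φ c y ∂ν ∂μ)
      = Matrix.of fun a c => ∫ q, F a c q ∂μ.prod ν := by
    ext a c
    exact (integral_prod _ (hInt a c)).symm
  have hterm (σ π τ : Perm (Fin N)) : Integrable (fun p : (Fin N → Γ₁) × (Fin N → Γ₂) =>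
      ((Perm.sign σ * Perm.sign π * Perm.sign τ : ℤˣ) : ℂ)
        * ∏ b, F (σ b) (τ (π b)) (p.1 b, p.2 (π b)))
      ((Measure.pi fun _ => μ).prod (Measure.pi fun _ => ν)) :=
    (integrable_prod_pairing_perm (fun b => hInt (σ b) (τ (π b))) π).const_mul _
  have hcomb := Matrix.sum_sign_mul_prod_eq_factorial_sq_mul_det
    (Matrix.of fun a c => ∫ q, F a c q ∂μ.prod ν)
  rw [Fintype.card_fin] at hcomb
  rw [← integral_prod _ hIntN, hK, ← hcomb]
  simp_rw [Matrix.det_mul_det_mul_det_eq_sum]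
  refine (integral_finsetSum _ fun σ _ => integrable_finsetSum _ fun π _ =>
    integrable_finsetSum _ fun τ _ => hterm σ π τ).trans (Fintype.sum_congr _ _ fun σ => ?_)
  refine (integral_finsetSum _ fun π _ => integrable_finsetSum _ fun τ _ => hterm σ π τ).trans
    (Fintype.sum_congr _ _ fun π => ?_)
  refine (integral_finsetSum _ fun τ _ => hterm σ π τ).trans (Fintype.sum_congr _ _ fun τ => ?_)
  exact (integral_const_mul _ _).trans
    (congrArg _ (integral_prod_pairing_perm (fun b => hInt (σ b) (τ (π b))) π))

/-- Multilevel Andreief identity for `m = 2`: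
`∫∫ det(ψ_a(x_b)) det(w(y_a,x_b)) det(φ_a(y_b)) dμ^N(x) dν^N(y)
  = (N!)² det(∫∫ ψ_a(x) w(y,x) φ_b(y) dμ(x) dν(y))`. -/
theorem andreief_two_level {Γ₁ Γ₂ : Type*} [MeasurableSpace Γ₁] [MeasurableSpace Γ₂]
    (μ : Measure Γ₁) (ν : Measure Γ₂) [SigmaFinite μ] [SigmaFinite ν] {N : ℕ}
    (ψ : Fin N → Γ₁ → ℂ) (φ : Fin N → Γ₂ → ℂ) (w : Γ₂ → Γ₁ → ℂ)
    (hψ : ∀ a, Measurable (ψ a)) (hφ : ∀ a, Measurable (φ a))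
    (hw : Measurable (Function.uncurry w))
    (hInt : ∀ a b, Integrable (fun p : Γ₁ × Γ₂ => ψ a p.1 * w p.2 p.1 * φ b p.2)
      (μ.prod ν))
    (hIntN : Integrable
      (fun p : (Fin N → Γ₁) × (Fin N → Γ₂) =>
        (Matrix.of fun a b => ψ a (p.1 b)).det
          * (Matrix.of fun a b => w (p.2 a) (p.1 b)).det
          * (Matrix.of fun a b => φ a (p.2 b)).det)
      ((Measure.pi fun _ => μ).prod (Measure.pi fun _ => ν))) :
    (∫ x : Fin N → Γ₁, ∫ y : Fin N → Γ₂,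
        (Matrix.of fun a b => ψ a (x b)).det
          * (Matrix.of fun a b => w (y a) (x b)).det
          * (Matrix.of fun a b => φ a (y b)).det
        ∂(Measure.pi fun _ => ν) ∂(Measure.pi fun _ => μ))
      = ((N.factorial : ℂ))^2
          * (Matrix.of fun a b =>
              ∫ x, ∫ y, ψ a x * w y x * φ b y ∂ν ∂μ).det :=
  andreief_two_level_general μ ν ψ φ w hInt hIntN
end
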